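/- The graph G (vertices: non-decreasing integer n-tuples; edges: d'_a = d_{σ(a)} - Σ_{s<a,σ(s)>σ(a)} c_{s,a} + Σ_{a<t,σ(a)>σ(t)} c_{a,t} with c_{a,b} ≥ -m) is isomorphic to the graph G' (vertices: integer n-tuples with d_a ≤ d_{a+1} + m for all a; edges: same formula but requiring c_{a,b} ≥ 0), via the map (d_1,...,d_n) ↦ (d_1 + m(n-1)/2, d_2 + m(n-3)/2, ..., d_n - m(n-1)/2) (assuming m(n-1) even, or working over half-integers). -/

import Mathlib

open scoped BigOperators

/-- The edge relation of the graph `G` (coefficients `c_{a,b} ≥ -m`). -/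
def GEdge (n m : ℕ) (d d' : Fin n → ℤ) : Prop :=
  ∃ σ : Equiv.Perm (Fin n), σ ≠ 1 ∧ ∃ c : Fin n → Fin n → ℤ,
    (∀ a b : Fin n, -(m : ℤ) ≤ c a b) ∧
    ∀ a : Fin n, d' a = d (σ a)
      - ∑ s ∈ Finset.univ.filter (fun s : Fin n => s < a ∧ σ a < σ s), c s a
      + ∑ t ∈ Finset.univ.filter (fun t : Fin n => a < t ∧ σ t < σ a), c a t

/-- The edge relation of the graph `G'` (coefficients `c_{a,b} ≥ 0`). -/
def G'Edge (n m : ℕ) (d d' : Fin n → ℤ) : Prop :=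
  ∃ σ : Equiv.Perm (Fin n), σ ≠ 1 ∧ ∃ c : Fin n → Fin n → ℤ,
    (∀ a b : Fin n, 0 ≤ c a b) ∧
    ∀ a : Fin n, d' a = d (σ a)
      - ∑ s ∈ Finset.univ.filter (fun s : Fin n => s < a ∧ σ a < σ s), c s a
      + ∑ t ∈ Finset.univ.filter (fun t : Fin n => a < t ∧ σ t < σ a), c a t

/-- The vertex condition of `G'`: `d_a ≤ d_{a+1} + m` for all `a`. -/
def G'Vertex (n m : ℕ) (d : Fin n → ℤ) : Prop :=
  ∀ (a : ℕ) (h : a + 1 < n), d ⟨a, by omega⟩ ≤ d ⟨a + 1, h⟩ + (m : ℤ)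

/-- The shift map `(d_1,…,d_n) ↦ (d_1 + m(n-1)/2, d_2 + m(n-3)/2, …, d_n - m(n-1)/2)`. -/
def shiftMap (n m : ℕ) (d : Fin n → ℤ) : Fin n → ℤ :=
  fun a => d a + ((m : ℤ) * ((n : ℤ) - 1 - 2 * (a.val : ℤ))) / 2

open Finset

/-! Write `o a = ⌊m (n - 1 - 2a) / 2⌋` for the offset added by `shiftMap` at position `a`.
Adding a multiple of `2` to the numerator moves the floor quotient exactly, so
`o a - o b = m (b - a)`;
hence `d_a ≤ d_{a+1}` becomes `d_a + o a ≤ d_{a+1} + o (a+1) + m`, the vertex condition of `G'`.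
On edges, replacing every `c_{s,t}` by `c_{s,t} + m` changes the `a`-th coordinate of the
edge formula by `m (#{t > a : σ t < σ a} - #{s < a : σ s > σ a}) = m (σ a - a) = o (σ a) - o a`,
which is exactly what is needed to carry an edge `d → d'` of `G` to `d + o → d' + o` in `G'`. -/

lemma card_filter_lt_sub_card_filter_gt {n : ℕ} (σ : Equiv.Perm (Fin n)) (a : Fin n) :
    (#{s | s < a ∧ σ a < σ s} : ℤ) - #{t | a < t ∧ σ t < σ a} = a - σ a := by
  have pointwise : ∀ s, ((if s < a ∧ σ a < σ s then 1 else 0) : ℤ)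
      - (if a < s ∧ σ s < σ a then 1 else 0)
      = (if s < a then 1 else 0) - (if σ s < σ a then 1 else 0) := by
    intro s
    have hinj : s ≠ a → σ s ≠ σ a := σ.injective.ne
    split_ifs <;> grind
  have card_lt (b : Fin n) : (#{s | s < b} : ℤ) = b := by
    rw [← Fin.card_Iio b]; congr 2; ext; simp
  calc (#{s | s < a ∧ σ a < σ s} : ℤ) - #{t | a < t ∧ σ t < σ a}
      = (#{s | s < a} : ℤ) - #{s | σ s < σ a} := by
        simp only [natCast_card_filter, ← sum_sub_distrib, pointwise]
    _ = (#{s | s < a} : ℤ) - #{t | t < σ a} := by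
        simp only [natCast_card_filter, ← Equiv.sum_comp σ (fun t => if t < σ a then (1 : ℤ) else 0)]
    _ = a - σ a := by rw [card_lt, card_lt]

lemma Fin.monotone_iff_forall_le_next {α : Type*} [Preorder α] {n : ℕ} {f : Fin n → α} :
    Monotone f ↔ ∀ (a : ℕ) (h : a + 1 < n), f ⟨a, by omega⟩ ≤ f ⟨a + 1, h⟩ := by
  cases n with
  | zero => exact ⟨fun _ a h => absurd h (by omega), fun _ i => i.elim0⟩
  | succ n =>
    rw [Fin.monotone_iff_le_succ]
    exact ⟨fun hf a h => hf ⟨a, by omega⟩, fun hf i => hf i i.succ.isLt⟩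

section Shift

variable {n m : ℕ}

lemma shiftMap_apply (d : Fin n → ℤ) (a : Fin n) : shiftMap n m d a = d a + shiftMap n m 0 a := by
  simp [shiftMap]

lemma shiftMap_zero_sub (a b : Fin n) :
    shiftMap n m 0 a - shiftMap n m 0 b = m * (b - a) := by
  have (x : Fin n) : shiftMap n m 0 x = m * (n - 1) / 2 - m * x := by
    rw [shiftMap, Pi.zero_apply, zero_add, sub_eq_add_neg (_ / 2),
      ← Int.add_mul_ediv_right _ _ two_ne_zero]
    ring_nf
  rw [this, this]; ring

lemma shiftMap_injective : Function.Injective (shiftMap n m) := fun d e h =>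
  funext fun a => by simpa [shiftMap_apply d, shiftMap_apply e] using congrFun h a

lemma shiftMap_surjective : Function.Surjective (shiftMap n m) := fun e =>
  ⟨e - shiftMap n m 0, funext fun a => by rw [shiftMap_apply, Pi.sub_apply, sub_add_cancel]⟩

lemma g'Vertex_shiftMap_iff (d : Fin n → ℤ) : G'Vertex n m (shiftMap n m d) ↔ Monotone d := by
  rw [Fin.monotone_iff_forall_le_next]
  refine forall₂_congr fun a h => ?_
  have := shiftMap_zero_sub (m := m) (⟨a, by omega⟩ : Fin n) ⟨a + 1, h⟩
  push_cast at this
  rw [shiftMap_apply d, shiftMap_apply d]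
  constructor <;> intro <;> linarith

end Shift

section Edges

variable {n : ℕ}

def edgeTarget (σ : Equiv.Perm (Fin n)) (c : Fin n → Fin n → ℤ) (d : Fin n → ℤ) : Fin n → ℤ :=
  fun a => d (σ a) - ∑ s with s < a ∧ σ a < σ s, c s a + ∑ t with a < t ∧ σ t < σ a, c a t

lemma gEdge_iff {m : ℕ} {d d' : Fin n → ℤ} :
    GEdge n m d d' ↔ ∃ σ ≠ 1, ∃ c, (∀ a b, -(m : ℤ) ≤ c a b) ∧ d' = edgeTarget σ c d := by
  simp only [GEdge, edgeTarget, funext_iff]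

lemma g'Edge_iff {m : ℕ} {d d' : Fin n → ℤ} :
    G'Edge n m d d' ↔ ∃ σ ≠ 1, ∃ c, (∀ a b, 0 ≤ c a b) ∧ d' = edgeTarget σ c d := by
  simp only [G'Edge, edgeTarget, funext_iff]

lemma edgeTarget_add_const (σ : Equiv.Perm (Fin n)) (c : Fin n → Fin n → ℤ) (k : ℤ)
    (d : Fin n → ℤ) (a : Fin n) :
    edgeTarget σ (fun s t => c s t + k) d a = edgeTarget σ c d a + k * (σ a - a) := by
  have := card_filter_lt_sub_card_filter_gt σ a
  simp only [edgeTarget, sum_add_distrib, sum_const, nsmul_eq_mul]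
  linear_combination (-k) * this

lemma edgeTarget_shiftMap (m : ℕ) (σ : Equiv.Perm (Fin n)) (c : Fin n → Fin n → ℤ)
    (d : Fin n → ℤ) :
    edgeTarget σ (fun s t => c s t + m) (shiftMap n m d) = shiftMap n m (edgeTarget σ c d) := by
  funext a
  have := shiftMap_zero_sub (m := m) (σ a) a
  rw [edgeTarget_add_const, shiftMap_apply (edgeTarget σ c d)]
  simp only [edgeTarget, shiftMap_apply d]
  linear_combination this

end Edges

theorem stmt16_general (n m : ℕ) :
    Set.BijOn (shiftMap n m) {d : Fin n → ℤ | Monotone d} {d : Fin n → ℤ | G'Vertex n m d} ∧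
    ∀ d e : Fin n → ℤ, Monotone d → Monotone e →
      (GEdge n m d e ↔ G'Edge n m (shiftMap n m d) (shiftMap n m e)) := by
  refine ⟨⟨fun d hd => (g'Vertex_shiftMap_iff d).2 hd, shiftMap_injective.injOn, ?_⟩, ?_⟩
  · intro e he
    obtain ⟨d, rfl⟩ := shiftMap_surjective (m := m) e
    exact ⟨d, (g'Vertex_shiftMap_iff d).1 he, rfl⟩
  · intro d e _ _
    rw [gEdge_iff, g'Edge_iff]
    refine exists_congr fun σ => and_congr_right fun _ => ⟨?_, ?_⟩
    · rintro ⟨c, hc, rfl⟩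
      exact ⟨fun s t => c s t + m, fun s t => by linarith [hc s t],
        (edgeTarget_shiftMap m σ c d).symm⟩
    · rintro ⟨c, hc, he⟩
      refine ⟨fun s t => c s t - m, fun s t => by linarith [hc s t], shiftMap_injective (m := m) ?_⟩
      rw [he, ← edgeTarget_shiftMap]
      simp only [sub_add_cancel]

/-- Assuming `m(n-1)` is even, the shift map is an isomorphism from the graph `G`
(vertices: non-decreasing tuples, coefficients `≥ -m`) onto the graph `G'`
(vertices: tuples with `d_a ≤ d_{a+1} + m`, coefficients `≥ 0`). -/
theorem stmt16 (n m : ℕ) (hpar : 2 ∣ m * (n - 1)) :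
    Set.BijOn (shiftMap n m) {d : Fin n → ℤ | Monotone d} {d : Fin n → ℤ | G'Vertex n m d} ∧
    ∀ d e : Fin n → ℤ, Monotone d → Monotone e →
      (GEdge n m d e ↔ G'Edge n m (shiftMap n m d) (shiftMap n m e)) :=
  stmt16_general n m
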